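/- Let γ = (γ_k) and β = (β_k) be sequences in the open unit disc with 0 < inf_k min(|γ_k|,|β_k|) and sup_k max(|γ_k|,|β_k|) < 1. If the difference of diagonal operators D₁(γ) − D₁(β) is compact, then D₂(γ) − D₂(β) is compact and the difference of GGT operators H(γ) − H(β) is compact. -/

import Mathlib

noncomputable section

/-- `ℓ²(ℤ)`. -/
abbrev l2Z : Type := lp (fun _ : ℤ => ℂ) 2

/-!
A diagonal operator on `ℓ^p` is compact exactly when its entries tend to zero along the cofinite
filter: if `‖d k‖ ≥ ε` for infinitely many `k`, the vectors `D e_k` are `ε`-separated points of a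
compact set; conversely, `D` is then the norm limit of its finite truncations. Hence
`γ k - β k → 0`, and since `z ↦ √(1 - ‖z‖²)` is uniformly continuous, the entries of
`D₂(γ) - D₂(β)` and of `D₁(γ)* - D₁(β)*` tend to zero too. So in the Calkin algebra `D₁`, `D₁*`
and `D₂` agree for `γ` and `β`, hence so do `I - D₂T` and its two-sided inverse, and therefore
the images of `H(γ)` and `H(β)`.
-/

open Filter Topology

theorem UniformContinuous.tendsto_sub_zero {ι E F : Type*} [SeminormedAddCommGroup E]
    [SeminormedAddCommGroup F] {f : E → F} (hf : UniformContinuous f) {l : Filter ι}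
    {u v : ι → E} (h : Tendsto (fun k => u k - v k) l (𝓝 0)) :
    Tendsto (fun k => f (u k) - f (v k)) l (𝓝 0) := by
  have huv : Tendsto (fun k => (v k, u k)) l (uniformity E) := by
    rw [uniformity_eq_comap_nhds_zero]
    exact tendsto_comap_iff.2 h
  have := Tendsto.comp hf huv
  rw [uniformity_eq_comap_nhds_zero] at this
  exact tendsto_comap_iff.1 this

theorem uniformContinuous_sqrt_one_sub_norm_sq :
    UniformContinuous fun z : ℂ => (√(1 - ‖z‖ ^ 2) : ℂ) := by
  refine HasCompactSupport.uniformContinuous_of_continuous ?_ (by fun_prop)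
  -- `Real.sqrt` vanishes on negative reals, so the function is supported in the unit disc.
  refine HasCompactSupport.intro (isCompact_closedBall (0 : ℂ) 1) fun z hz => ?_
  rw [Metric.mem_closedBall, dist_zero_right, not_le] at hz
  rw [Real.sqrt_eq_zero'.2 (by nlinarith), Complex.ofReal_zero]

section CompactOperatorIdeal

variable (𝕜 E : Type*) [NontriviallyNormedField 𝕜] [NormedAddCommGroup E] [NormedSpace 𝕜 E]

def compactOperatorIdeal : TwoSidedIdeal (E →L[𝕜] E) :=
  .mk' {A | IsCompactOperator A} isCompactOperator_zero
    (fun hA hB => hA.add hB) (fun hA => hA.neg)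
    (fun {A _} hB => hB.clm_comp A) (fun {_ B} hA => hA.comp_clm B)

variable {𝕜 E}

theorem mem_compactOperatorIdeal {A : E →L[𝕜] E} :
    A ∈ compactOperatorIdeal 𝕜 E ↔ IsCompactOperator A :=
  TwoSidedIdeal.mem_mk' _ _ _ _ _ _ _

def calkinMap : (E →L[𝕜] E) →+* (compactOperatorIdeal 𝕜 E).ringCon.Quotient :=
  (compactOperatorIdeal 𝕜 E).ringCon.mk'

theorem calkinMap_eq_calkinMap_iff {A B : E →L[𝕜] E} :
    calkinMap A = calkinMap B ↔ IsCompactOperator (A - B) :=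
  (RingCon.eq _).trans <| (TwoSidedIdeal.rel_iff _ _ _).trans mem_compactOperatorIdeal

end CompactOperatorIdeal

section Diagonal

variable {ι 𝕜 : Type*} [RCLike 𝕜] {p : ENNReal} [Fact (1 ≤ p)]

def coordProj [DecidableEq ι] (s : Finset ι) :
    lp (fun _ : ι => 𝕜) p →L[𝕜] lp (fun _ : ι => 𝕜) p :=
  ∑ i ∈ s, (lp.singleContinuousLinearMap 𝕜 _ p i).comp (lp.evalCLM 𝕜 _ p i)

theorem coordProj_apply [DecidableEq ι] (s : Finset ι) (φ : lp (fun _ : ι => 𝕜) p) (i : ι) :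
    coordProj s φ i = if i ∈ s then φ i else 0 := by
  simp only [coordProj, sum_apply, lp.coeFn_sum, Finset.sum_apply]
  simp [lp.evalCLM, lp.single_apply, Pi.single_apply]

theorem isCompactOperator_coordProj [DecidableEq ι] (s : Finset ι) :
    IsCompactOperator (coordProj (𝕜 := 𝕜) (p := p) s) :=
  (compactOperator (RingHom.id 𝕜) _ _).sum_mem fun i _ => show IsCompactOperator _ from
    (isCompactOperator_of_locallyCompactSpace_dom (lp.evalCLM 𝕜 (fun _ : ι => 𝕜) p i)).clm_comp
      (lp.singleContinuousLinearMap 𝕜 (fun _ : ι => 𝕜) p i)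

def IsDiagonalOperator (D : lp (fun _ : ι => 𝕜) p →L[𝕜] lp (fun _ : ι => 𝕜) p) (d : ι → 𝕜) :
    Prop :=
  ∀ φ k, D φ k = d k * φ k

variable {D D' : lp (fun _ : ι => 𝕜) p →L[𝕜] lp (fun _ : ι => 𝕜) p} {d d' : ι → 𝕜}

theorem IsDiagonalOperator.sub (hD : IsDiagonalOperator D d) (hD' : IsDiagonalOperator D' d') :
    IsDiagonalOperator (D - D') (d - d') := fun φ k => by
  simp [hD φ k, hD' φ k, sub_mul]

theorem IsDiagonalOperator.apply_single [DecidableEq ι] (hD : IsDiagonalOperator D d) (k : ι)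
    (a : 𝕜) : D (lp.single p k a) = lp.single p k (d k * a) := by
  ext j
  rw [hD, lp.single_apply, lp.single_apply]
  rcases eq_or_ne j k with rfl | h
  · simp
  · simp [h]

theorem norm_le_dist_single_single [DecidableEq ι] {i j : ι} (hij : i ≠ j) (a b : 𝕜) :
    ‖a‖ ≤ dist (lp.single p i a : lp (fun _ : ι => 𝕜) p) (lp.single p j b) := by
  calc ‖a‖ = ‖(lp.single p i a - lp.single p j b : lp (fun _ : ι => 𝕜) p) i‖ := by
        simp [lp.single_apply, hij]
    _ ≤ _ := lp.norm_apply_le_norm (zero_lt_one.trans_le Fact.out).ne' _ i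
    _ = _ := (dist_eq_norm _ _).symm

theorem norm_le_mul_norm_of_forall_norm_apply_le {x y : lp (fun _ : ι => 𝕜) p} {c : ℝ}
    (hc : 0 ≤ c) (h : ∀ i, ‖x i‖ ≤ c * ‖y i‖) : ‖x‖ ≤ c * ‖y‖ := by
  have := lp.norm_mono (zero_lt_one.trans_le Fact.out).ne' (x := x) (y := (c : 𝕜) • y)
    fun i => by simpa [norm_smul, abs_of_nonneg hc] using h i
  simpa [norm_smul, abs_of_nonneg hc] using this

theorem IsDiagonalOperator.tendsto_cofinite_zero (hD : IsDiagonalOperator D d)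
    (hc : IsCompactOperator D) : Tendsto d cofinite (𝓝 0) := by
  classical
  refine Metric.tendsto_nhds.2 fun ε hε => ?_
  by_contra hinf
  rw [eventually_cofinite] at hinf
  obtain ⟨K, hK, hDK⟩ := hc.image_closedBall_subset_compact 1
  let e := Set.Infinite.natEmbedding _ hinf
  have hu : ∀ n, D (lp.single p (e n) 1) ∈ K := fun n =>
    hDK ⟨_, by simp [lp.norm_single (zero_lt_one.trans_le Fact.out)], rfl⟩
  obtain ⟨_, -, φ, hφ, hlim⟩ := hK.tendsto_subseq hu
  obtain ⟨N, hN⟩ := Metric.cauchySeq_iff'.1 hlim.cauchySeq ε hε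
  have hne : (e (φ (N + 1)) : ι) ≠ e (φ N) := fun h =>
    (hφ N.lt_succ_self).ne' (e.injective (Subtype.ext h))
  have hbig : ε ≤ ‖d (e (φ (N + 1)))‖ := by
    simpa using (e (φ (N + 1))).2
  refine (hN (N + 1) N.le_succ).not_ge (hbig.trans ?_)
  simpa [hD.apply_single] using norm_le_dist_single_single (p := p) hne (d _) (d _)

theorem IsDiagonalOperator.isCompactOperator (hD : IsDiagonalOperator D d)
    (hd : Tendsto d cofinite (𝓝 0)) : IsCompactOperator D := by
  classical
  refine isCompactOperator_of_tendsto (l := atTop) (F := fun s => D.comp (coordProj s)) ?_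
    (Eventually.of_forall fun s => (isCompactOperator_coordProj s).clm_comp D)
  refine Metric.tendsto_nhds.2 fun ε hε => ?_
  have hfin : {k | ε / 2 ≤ ‖d k‖}.Finite := by
    simpa [eventually_cofinite] using Metric.tendsto_nhds.1 hd (ε / 2) (half_pos hε)
  filter_upwards [eventually_ge_atTop hfin.toFinset] with s hs
  rw [dist_eq_norm]
  refine (ContinuousLinearMap.opNorm_le_bound _ (half_pos hε).le fun φ =>
    norm_le_mul_norm_of_forall_norm_apply_le (half_pos hε).le fun i => ?_).trans_lt
      (half_lt_self hε)
  by_cases hi : i ∈ s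
  · simp only [sub_apply, lp.coeFn_sub, Pi.sub_apply,
      ContinuousLinearMap.comp_apply, hD _ i, coordProj_apply, if_pos hi, sub_self, norm_zero]
    positivity
  · have hdi : ‖d i‖ < ε / 2 := not_le.1 fun h => hi (hs (hfin.mem_toFinset.2 h))
    simpa [hD _ i, coordProj_apply, hi] using
      mul_le_mul_of_nonneg_right hdi.le (norm_nonneg (φ i))

end Diagonal

theorem IsDiagonalOperator.star {ι 𝕜 : Type*} [RCLike 𝕜]
    {D : lp (fun _ : ι => 𝕜) 2 →L[𝕜] lp (fun _ : ι => 𝕜) 2} {d : ι → 𝕜}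
    (hD : IsDiagonalOperator D d) : IsDiagonalOperator (Star.star D) (Star.star d) := fun φ k => by
  classical
  calc (Star.star D φ) k = inner 𝕜 (lp.single 2 k 1 : lp (fun _ : ι => 𝕜) 2) (Star.star D φ) := by
        simp [lp.inner_single_left]
    _ = inner 𝕜 (D (lp.single 2 k 1)) φ := by
        rw [ContinuousLinearMap.star_eq_adjoint, ContinuousLinearMap.adjoint_inner_right]
    _ = Star.star (d k) * φ k := by
        simp [hD.apply_single, lp.inner_single_left, mul_comm]

theorem stmt5_general (γ β : ℤ → ℂ)
    -- the shift T and the diagonal operators D₁, D₂ for γ and β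
    (T D1γ D1β D2γ D2β Rγ Rβ : l2Z →L[ℂ] l2Z)
    (hD1γ : ∀ (φ : l2Z) (k : ℤ), (D1γ φ) k = γ k * φ k)
    (hD1β : ∀ (φ : l2Z) (k : ℤ), (D1β φ) k = β k * φ k)
    (hD2γ : ∀ (φ : l2Z) (k : ℤ), (D2γ φ) k = (Real.sqrt (1 - ‖γ k‖ ^ 2) : ℂ) * φ k)
    (hD2β : ∀ (φ : l2Z) (k : ℤ), (D2β φ) k = (Real.sqrt (1 - ‖β k‖ ^ 2) : ℂ) * φ k)
    -- Rγ, Rβ are the inverses of I − D₂(γ)T and I − D₂(β)T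
    (hRγ : Rγ * (1 - D2γ * T) = 1 ∧ (1 - D2γ * T) * Rγ = 1)
    (hRβ : Rβ * (1 - D2β * T) = 1 ∧ (1 - D2β * T) * Rβ = 1)
    -- hypothesis: D₁(γ) − D₁(β) is compact
    (hcomp : IsCompactOperator ⇑(D1γ - D1β)) :
    IsCompactOperator ⇑(D2γ - D2β) ∧
    IsCompactOperator ⇑((star T * D2γ - star T * D1γ * T * Rγ * star D1γ) -
      (star T * D2β - star T * D1β * T * Rβ * star D1β)) := by
  have hγβ : Tendsto (γ - β) cofinite (𝓝 0) :=
    (IsDiagonalOperator.sub hD1γ hD1β).tendsto_cofinite_zero hcomp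
  have hD2 : IsCompactOperator (D2γ - D2β) :=
    (IsDiagonalOperator.sub hD2γ hD2β).isCompactOperator
      (uniformContinuous_sqrt_one_sub_norm_sq.tendsto_sub_zero (u := γ) (v := β) hγβ)
  have hD1star : IsCompactOperator (star D1γ - star D1β) :=
    ((IsDiagonalOperator.star hD1γ).sub (IsDiagonalOperator.star hD1β)).isCompactOperator
      (show Tendsto (fun k => star (γ k) - star (β k)) cofinite (𝓝 0) by
        simpa only [Pi.sub_apply, star_sub, star_zero] using hγβ.star)
  refine ⟨hD2, ?_⟩
  rw [← calkinMap_eq_calkinMap_iff] at hcomp hD2 hD1star ⊢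
  have hA : calkinMap (1 - D2γ * T) = calkinMap (1 - D2β * T) := by
    simp only [map_sub, map_mul, hD2]
  have hR : calkinMap Rγ = calkinMap Rβ :=
    left_inv_eq_right_inv (by rw [← map_mul, hRγ.1, map_one])
      (by rw [hA, ← map_mul, hRβ.2, map_one])
  simp only [map_sub, map_mul, hcomp, hD2, hD1star, hR]

/-- Lemma 3.9 ("ggt0"): for two Verblunsky-type sequences `γ, β` in the open unit disc
with moduli uniformly bounded away from `0` and `1`, if `D₁(γ) − D₁(β)` is compact then
so are `D₂(γ) − D₂(β)` and `H(γ) − H(β)`, where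
`H(γ) = T*D₂(γ) − T*D₁(γ)T(I − D₂(γ)T)⁻¹D₁(γ)*` is the GGT operator. -/
theorem stmt5 (γ β : ℤ → ℂ)
    (hlow : ∃ b > (0 : ℝ), ∀ k : ℤ, b ≤ ‖γ k‖ ∧ b ≤ ‖β k‖)
    (hupp : ∃ B < (1 : ℝ), ∀ k : ℤ, ‖γ k‖ ≤ B ∧ ‖β k‖ ≤ B)
    -- the shift T and the diagonal operators D₁, D₂ for γ and β
    (T D1γ D1β D2γ D2β Rγ Rβ : l2Z →L[ℂ] l2Z)
    (hT : ∀ (φ : l2Z) (k : ℤ), (T φ) k = φ (k - 1))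
    (hD1γ : ∀ (φ : l2Z) (k : ℤ), (D1γ φ) k = γ k * φ k)
    (hD1β : ∀ (φ : l2Z) (k : ℤ), (D1β φ) k = β k * φ k)
    (hD2γ : ∀ (φ : l2Z) (k : ℤ), (D2γ φ) k = (Real.sqrt (1 - ‖γ k‖ ^ 2) : ℂ) * φ k)
    (hD2β : ∀ (φ : l2Z) (k : ℤ), (D2β φ) k = (Real.sqrt (1 - ‖β k‖ ^ 2) : ℂ) * φ k)
    -- Rγ, Rβ are the inverses of I − D₂(γ)T and I − D₂(β)T
    (hRγ : Rγ * (1 - D2γ * T) = 1 ∧ (1 - D2γ * T) * Rγ = 1)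
    (hRβ : Rβ * (1 - D2β * T) = 1 ∧ (1 - D2β * T) * Rβ = 1)
    -- hypothesis: D₁(γ) − D₁(β) is compact
    (hcomp : IsCompactOperator ⇑(D1γ - D1β)) :
    IsCompactOperator ⇑(D2γ - D2β) ∧
    IsCompactOperator ⇑((star T * D2γ - star T * D1γ * T * Rγ * star D1γ) -
      (star T * D2β - star T * D1β * T * Rβ * star D1β)) :=
  stmt5_general γ β T D1γ D1β D2γ D2β Rγ Rβ hD1γ hD1β hD2γ hD2β hRγ hRβ hcomp
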